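/- Let (M,α) be a Poisson manifold and Ω a volume form on M with generator D_Ω of the Schouten bracket on multivector fields. The modular vector field χ_Ω = D_Ω(α) is closed in the Lichnerowicz–Poisson complex: [α, χ_Ω] = 0, where [,] is the Schouten–Nijenhuis bracket. -/
import Mathlib


/-- The Koszul sign `(-1)^n` associated to an integer degree `n`. -/
def gsign (n : ℤ) : ℤ := (-1) ^ n.natAbs

lemma half_cancel {A : Type*} [Ring A] [Algebra ℚ A] (x : A) (h : x + x = 0) : x = 0 := by
  have h2 : (2 : ℚ) • x = 0 := by rw [two_smul]; exact h
  have : x = (2 : ℚ)⁻¹ • ((2 : ℚ) • x) := by rw [smul_smul]; norm_num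
  rw [this, h2, smul_zero]

/-- Algebraic version: let `A` be the (graded commutative) algebra of
multivector fields on a manifold with its Schouten bracket `br` (odd Poisson bracket with
the degree conventions of multivector fields), and let `D` be the BV generator determined
by a volume form `Ω`, i.e. an odd operator with `D² = 0` generating `br`.  If `α` is a
Poisson bivector, i.e. `α` homogeneous of degree 2 with `[α,α] = 0`, then the modular
vector field `χ_Ω = D α` is closed in the Lichnerowicz–Poisson complex:
`[α, D α] = 0`. -/
theorem modular_vector_field_is_LP_closed
    {A : Type*} [Ring A] [Algebra ℚ A]
    (homog : ℤ → A → Prop)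
    (D : A → A) (br : A → A → A)
    (hcomm : ∀ d e f g, homog d f → homog e g → f * g = gsign (d * e) • (g * f))
    (hmul : ∀ d e f g, homog d f → homog e g → homog (d + e) (f * g))
    (hDhom : ∀ d f, homog d f → homog (d - 1) (D f))
    (hDadd : ∀ f g, D (f + g) = D f + D g)
    (hD2 : ∀ f, D (D f) = 0)
    -- D generates the (odd, shifted-degree) Schouten bracket
    (hgen : ∀ d f g, homog d f →
      br f g = gsign d • D (f * g) + gsign (d + 1) • (D f * g) - f * D g)
    -- graded antisymmetry of the Schouten bracket
    (hskew : ∀ d e f g, homog d f → homog e g →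
      br f g = - gsign ((d + 1) * (e + 1)) • br g f)
    (α : A) (hα : homog 2 α)
    -- α is Poisson
    (hPoisson : br α α = 0) :
    br α (D α) = 0 := by
  have h1 : homog 1 (D α) := by
    have := hDhom 2 α hα
    norm_num at this
    exact this
  -- (Dα)·(Dα) = 0
  have hsq : D α * D α = 0 := by
    have h := hcomm 1 1 (D α) (D α) h1 h1
    have hg : gsign (1 * 1) = -1 := by decide
    rw [hg] at h
    apply half_cancel
    calc D α * D α + D α * D α
        = (-1 : ℤ) • (D α * D α) + D α * D α := by rw [← h]
      _ = 0 := by simp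
  -- Dα·α = α·Dα
  have hcom : D α * α = α * D α := by
    have h := hcomm 1 2 (D α) α h1 hα
    have hg : gsign (1 * 2) = 1 := by decide
    rw [hg] at h
    simpa using h
  -- from Poisson: D(α·α) = α·Dα + α·Dα
  have hgen2 := hgen 2 α α hα
  have hg2 : gsign (2 : ℤ) = 1 := by decide
  have hg3 : gsign (2 + 1 : ℤ) = -1 := by decide
  rw [hg2, hg3, hPoisson] at hgen2
  have hDαα : D (α * α) = α * D α + α * D α := by
    have h0 : (0 : A) = D (α * α) - (α * D α + α * D α) := by
      simpa [hcom, sub_sub, sub_eq_add_neg, add_assoc] using hgen2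
    exact sub_eq_zero.mp h0.symm
  -- hence D(α·Dα) = 0
  have hDαDα : D (α * D α) = 0 := by
    apply half_cancel
    rw [← hDadd, ← hDαα, hD2]
  -- conclude
  have h := hgen 2 α (D α) hα
  rw [hg2, hg3] at h
  rw [h, hDαDα, hsq, hD2]
  simp
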